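/- Let n ≥ 2 and let H_n be the branch gadget graph. For every p ∈ {0,1,…,n}, the set A_p := {u^1,…,u^p} ∪ {w^{p+1},…,w^n} is an n-independent set of H_n, and no neighbour of A_p in the token-sliding reconfiguration graph TS_n(H_n) contains any of the pink vertices y^1,…,y^{n−1}; equivalently, for every x ∈ A_p and every r ∈ [n−1] such that x is adjacent to y^r, the set (A_p \ {x}) ∪ {y^r} is not an independent set of H_n. -/
import Mathlib


/-- An independent set of a graph, as a finset of pairwise non-adjacent vertices. -/
def IsIndepF {V : Type*} (H : SimpleGraph V) (I : Finset V) : Prop :=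
  ∀ u ∈ I, ∀ v ∈ I, ¬ H.Adj u v

/-- Vertices of the branch gadget graph `H_n`: `u^1,…,u^n`, `w^1,…,w^n` and the
pink vertices `y^1,…,y^{n-1}` (0-based indices: `u t` is `u^{t+1}`, etc.). -/
inductive BVert (n : ℕ) : Type where
  | u : Fin n → BVert n
  | w : Fin n → BVert n
  | y : Fin (n - 1) → BVert n
deriving DecidableEq

/-- The branch gadget graph `H_n`: edges are `y^s y^t` (`s ≠ t`), `y^s u^t` (`t ≥ s`),
and `y^s w^t` (`t ≤ s + 1`), with 1-based indices. -/
def branchGadget (n : ℕ) : SimpleGraph (BVert n) :=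
  SimpleGraph.fromRel (fun a b =>
    match a, b with
    | .y s, .y t => s ≠ t
    | .y s, .u t => s.val ≤ t.val
    | .y s, .w t => t.val ≤ s.val + 1
    | _, _ => False)

/-- The set `A_p = {u^1,…,u^p} ∪ {w^{p+1},…,w^n}`. -/
def Aset (n p : ℕ) : Finset (BVert n) :=
  (Finset.univ.filter (fun i : Fin n => i.val < p)).image BVert.u ∪
  (Finset.univ.filter (fun i : Fin n => p ≤ i.val)).image BVert.w

lemma mem_Aset_iff {n p : ℕ} {x : BVert n} :
    x ∈ Aset n p ↔ (∃ i : Fin n, i.val < p ∧ x = BVert.u i) ∨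
      (∃ i : Fin n, p ≤ i.val ∧ x = BVert.w i) := by
  simp [Aset, eq_comm]

lemma adj_u_y {n : ℕ} (t : Fin n) (s : Fin (n-1)) (h : s.val ≤ t.val) :
    (branchGadget n).Adj (BVert.u t) (BVert.y s) := by
  rw [branchGadget, SimpleGraph.fromRel_adj]
  exact ⟨by simp, Or.inr h⟩

lemma adj_w_y {n : ℕ} (t : Fin n) (s : Fin (n-1)) (h : t.val ≤ s.val + 1) :
    (branchGadget n).Adj (BVert.w t) (BVert.y s) := by
  rw [branchGadget, SimpleGraph.fromRel_adj]
  exact ⟨by simp, Or.inr h⟩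

lemma filter_lt_card (n p : ℕ) (hp : p ≤ n) :
    (Finset.univ.filter fun i : Fin n => i.val < p).card = p := by
  rcases eq_or_lt_of_le hp with h | h
  · subst h
    simp [Finset.filter_true_of_mem (fun (i : Fin p) _ => i.isLt)]
  · have : (Finset.univ.filter fun i : Fin n => i.val < p) = Finset.Iio ⟨p, h⟩ := by
      ext i; simp [Fin.lt_def]
    rw [this, Fin.card_Iio]

theorem branchGadget_full_no_move_to_pink
    (n : ℕ) (hn : 2 ≤ n) (p : ℕ) (hp : p ≤ n) :
    (Aset n p).card = n ∧ IsIndepF (branchGadget n) (Aset n p) ∧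
    ∀ x ∈ Aset n p, ∀ r : Fin (n - 1), (branchGadget n).Adj x (BVert.y r) →
      ¬ IsIndepF (branchGadget n) ((Aset n p).erase x ∪ {BVert.y r}) := by
  have hui : Function.Injective (BVert.u (n := n)) := fun a b h => by
    cases h; rfl
  have hwi : Function.Injective (BVert.w (n := n)) := fun a b h => by
    cases h; rfl
  refine ⟨?_, ?_, ?_⟩
  · rw [Aset, Finset.card_union_of_disjoint, Finset.card_image_of_injective _ hui,
      Finset.card_image_of_injective _ hwi, filter_lt_card n p hp]
    · have : (Finset.univ.filter fun i : Fin n => p ≤ i.val) =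
          (Finset.univ.filter fun i : Fin n => i.val < p)ᶜ := by
        ext i; simp
      rw [this, Finset.card_compl, filter_lt_card n p hp, Fintype.card_fin]
      omega
    · simp only [Finset.disjoint_left, Finset.mem_image]
      rintro x ⟨i, -, rfl⟩ ⟨j, -, hj⟩
      exact absurd hj (by simp)
  · intro a ha b hb hab
    rw [branchGadget, SimpleGraph.fromRel_adj] at hab
    rcases mem_Aset_iff.mp ha with ⟨i, -, rfl⟩ | ⟨i, -, rfl⟩ <;>
      rcases mem_Aset_iff.mp hb with ⟨j, -, rfl⟩ | ⟨j, -, rfl⟩ <;>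
      rcases hab with ⟨-, h | h⟩ <;> exact h
  · intro x hx r hadj hind
    have hr1 : r.val + 1 < n := by have := r.isLt; omega
    -- helper: to contradict, find z ∈ Aset, z ≠ x, adjacent to y r
    have key : ∀ z : BVert n, z ∈ Aset n p → z ≠ x →
        (branchGadget n).Adj z (BVert.y r) → False := by
      intro z hz hzx hzadj
      exact hind z (Finset.mem_union_left _ (Finset.mem_erase.mpr ⟨hzx, hz⟩))
        (BVert.y r) (Finset.mem_union_right _ (Finset.mem_singleton_self _)) hzadj
    rw [branchGadget, SimpleGraph.fromRel_adj] at hadj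
    rcases mem_Aset_iff.mp hx with ⟨i, hi, rfl⟩ | ⟨i, hi, rfl⟩
    · -- x = u i, with r ≤ i from adjacency
      have hri : r.val ≤ i.val := by
        rcases hadj with ⟨-, h | h⟩
        · cases h
        · exact h
      by_cases hpr : p ≤ r.val + 1
      · -- p = r+1, use w^p
        have hpn : p < n := by omega
        refine key (BVert.w ⟨p, hpn⟩) ?_ (by simp) (adj_w_y _ _ hpr)
        exact mem_Aset_iff.mpr (Or.inr ⟨⟨p, hpn⟩, le_refl _, rfl⟩)
      · by_cases hir : i.val = r.val
        · refine key (BVert.u ⟨r.val + 1, hr1⟩) ?_ ?_ (adj_u_y _ _ (by simp))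
          · exact mem_Aset_iff.mpr (Or.inl ⟨_, by simp; omega, rfl⟩)
          · simp only [ne_eq, BVert.u.injEq, Fin.ext_iff]; omega
        · refine key (BVert.u ⟨r.val, by omega⟩) ?_ ?_ (adj_u_y _ _ (by simp))
          · exact mem_Aset_iff.mpr (Or.inl ⟨_, by simp; omega, rfl⟩)
          · simp [Fin.ext_iff]; omega
    · -- x = w i, with i ≤ r+1 from adjacency
      have hir : i.val ≤ r.val + 1 := by
        rcases hadj with ⟨-, h | h⟩
        · cases h
        · exact h
      by_cases hpr : p ≤ r.val
      · by_cases hip : i.val = p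
        · refine key (BVert.w ⟨r.val + 1, hr1⟩) ?_ ?_ (adj_w_y _ _ (by simp))
          · exact mem_Aset_iff.mpr (Or.inr ⟨_, by simp; omega, rfl⟩)
          · simp [Fin.ext_iff]; omega
        · refine key (BVert.w ⟨p, by omega⟩) ?_ ?_ (adj_w_y _ _ (by simp; omega))
          · exact mem_Aset_iff.mpr (Or.inr ⟨_, by simp, rfl⟩)
          · simp [Fin.ext_iff]; omega
      · -- r < p ≤ i ≤ r+1 so p = i = r+1, use u^r
        refine key (BVert.u ⟨r.val, by omega⟩) ?_ (by simp) (adj_u_y _ _ (by simp))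
        exact mem_Aset_iff.mpr (Or.inl ⟨_, by simp; omega, rfl⟩)
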